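/- arXiv:2410.12516 — 2 statements merged into one kernel-verified Lean document; each statement's English description precedes it below -/
import Mathlib

section
/- Let 𝒜_ε be a ℂ_ε-linear braided monoidal category with free Hom-spaces whose reduction 𝒜_0 modulo ε is symmetric monoidal with symmetry β_0 = [β]_0. Define t_{X,Y} := [β²_{X,Y} − id_{X⊗Y}]_1: X⊗Y → X⊗Y in 𝒜_0, where β² denotes the double braiding. Then each t_{X,Y} is well-defined, t is natural in X and Y, and t is symmetric in the sense that (β_0)_{Y,X} ∘ t_{Y,X} ∘ (β_0)_{X,Y} = t_{X,Y}. -/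
/-!
Apart from existence, which is the hypothesis, each claim says that a morphism `m` is
divisible by `ε`. Multiplying by `ε` turns the relations `β² - 𝟙 = ε • t` into identities
between composites of braidings which give `ε • m = 0`; in the symmetry claim the only
extra term is `(ε • t) ≫ (ε • t)`, which vanishes as `ε² = 0`. In a free `R[ε]`-module
the annihilator of `ε` is `ε` times the module (coordinatewise, `ε * (a + bε) = aε`
vanishes only when `a = 0`), so `m` is divisible by `ε`.
-/

open CategoryTheory MonoidalCategory DualNumber TrivSqZeroExt

universe v u

namespace DualNumber

variable {R : Type*} [Semiring R]

lemma eq_eps_mul_inl_snd_of_eps_mul_eq_zero {x : R[ε]} (h : ε * x = 0) :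
    x = ε * inl x.snd := by
  have hfst : x.fst = 0 := by simpa using congrArg snd h
  ext <;> simp [hfst]

lemma exists_eq_eps_smul_of_eps_smul_eq_zero {M : Type*} [AddCommGroup M] [Module R[ε] M]
    [Module.Free R[ε] M] {m : M} (h : (ε : R[ε]) • m = 0) : ∃ u, m = (ε : R[ε]) • u := by
  set b := Module.Free.chooseBasis R[ε] M
  have hcoord : ∀ i, b.repr m i = ε * inl (b.repr m i).snd := fun i =>
    eq_eps_mul_inl_snd_of_eps_mul_eq_zero (by simpa using congrArg (b.repr · i) h)
  refine ⟨b.repr.symm ((b.repr m).mapRange (fun x => inl x.snd) (by simp)), ?_⟩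
  refine b.repr.injective (Finsupp.ext fun i => ?_)
  rw [map_smul, LinearEquiv.apply_symm_apply, Finsupp.smul_apply]
  exact hcoord i

end DualNumber

variable {R : Type*} [Semiring R] {C : Type*} [Category C]

lemma eps_smul_comp_eps_smul [Preadditive C] [Linear R[ε] C] {X Y Z : C} (f : X ⟶ Y)
    (g : Y ⟶ Z) : ((ε : R[ε]) • f) ≫ ((ε : R[ε]) • g) = 0 := by
  rw [Linear.smul_comp, Linear.comp_smul, smul_smul, eps_mul_eps, zero_smul]

section Braided

variable [MonoidalCategory C] [BraidedCategory C]

lemma tensorHom_comp_braiding_sq {X X' Y Y' : C} (f : X ⟶ X') (g : Y ⟶ Y') :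
    (f ⊗ₘ g) ≫ (β_ X' Y').hom ≫ (β_ Y' X').hom
      = ((β_ X Y).hom ≫ (β_ Y X).hom) ≫ (f ⊗ₘ g) := by
  simp only [← Category.assoc, BraidedCategory.braiding_naturality]
  simp only [Category.assoc, BraidedCategory.braiding_naturality]

variable [Preadditive C] [Linear R[ε] C]

lemma eps_smul_tensorHom_comp_sub_eq_zero {X X' Y Y' : C} (f : X ⟶ X') (g : Y ⟶ Y')
    {t : X ⊗ Y ⟶ X ⊗ Y} {t' : X' ⊗ Y' ⟶ X' ⊗ Y'}
    (ht : (β_ X Y).hom ≫ (β_ Y X).hom - 𝟙 (X ⊗ Y) = (ε : R[ε]) • t)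
    (ht' : (β_ X' Y').hom ≫ (β_ Y' X').hom - 𝟙 (X' ⊗ Y') = (ε : R[ε]) • t') :
    (ε : R[ε]) • ((f ⊗ₘ g) ≫ t' - t ≫ (f ⊗ₘ g)) = 0 := by
  rw [smul_sub, ← Linear.comp_smul, ← Linear.smul_comp, ← ht, ← ht', Preadditive.comp_sub,
    Preadditive.sub_comp, tensorHom_comp_braiding_sq, Category.comp_id, Category.id_comp,
    sub_self]

lemma eps_smul_braiding_conj_sub_eq_zero {X Y : C}
    {t : X ⊗ Y ⟶ X ⊗ Y} {t' : Y ⊗ X ⟶ Y ⊗ X}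
    (ht : (β_ X Y).hom ≫ (β_ Y X).hom - 𝟙 (X ⊗ Y) = (ε : R[ε]) • t)
    (ht' : (β_ Y X).hom ≫ (β_ X Y).hom - 𝟙 (Y ⊗ X) = (ε : R[ε]) • t') :
    (ε : R[ε]) • ((β_ X Y).hom ≫ t' ≫ (β_ Y X).hom - t) = 0 := by
  have hsq : (β_ X Y).hom ≫ (β_ Y X).hom = 𝟙 (X ⊗ Y) + (ε : R[ε]) • t := by
    rw [← ht, add_sub_cancel]
  have hconj : (ε : R[ε]) • ((β_ X Y).hom ≫ t' ≫ (β_ Y X).hom)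
      = ((β_ X Y).hom ≫ (β_ Y X).hom) ≫ ((β_ X Y).hom ≫ (β_ Y X).hom - 𝟙 (X ⊗ Y)) := by
    rw [← Linear.comp_smul, ← Linear.smul_comp, ← ht', Preadditive.sub_comp,
      Preadditive.comp_sub, Preadditive.comp_sub]
    simp only [Category.assoc, Category.id_comp, Category.comp_id]
  rw [smul_sub, hconj, ht, hsq, Preadditive.add_comp, Category.id_comp,
    eps_smul_comp_eps_smul, add_zero, sub_self]

end Braided

theorem statement_7_general
    (A : Type u) [Category.{v} A] [MonoidalCategory A] [BraidedCategory A]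
    [Preadditive A] [Linear (DualNumber ℂ) A]
    -- free Hom-spaces:
    (hfree : ∀ X Y : A, Module.Free (DualNumber ℂ) (X ⟶ Y))
    -- the reduction mod ε is symmetric: β² ≡ id (mod ε):
    (hsym : ∀ X Y : A, ∃ u : X ⊗ Y ⟶ X ⊗ Y,
      (β_ X Y).hom ≫ (β_ Y X).hom - 𝟙 (X ⊗ Y) = (DualNumber.eps : DualNumber ℂ) • u) :
    -- t_{X,Y} := [β² − id]₁ is well-defined: representatives exist and any two agree
    -- modulo ε:
    (∀ X Y : A, ∃ t : X ⊗ Y ⟶ X ⊗ Y,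
      (β_ X Y).hom ≫ (β_ Y X).hom - 𝟙 (X ⊗ Y) = (DualNumber.eps : DualNumber ℂ) • t) ∧
    (∀ (X Y : A) (t t' : X ⊗ Y ⟶ X ⊗ Y),
      (β_ X Y).hom ≫ (β_ Y X).hom - 𝟙 (X ⊗ Y) = (DualNumber.eps : DualNumber ℂ) • t →
      (β_ X Y).hom ≫ (β_ Y X).hom - 𝟙 (X ⊗ Y) = (DualNumber.eps : DualNumber ℂ) • t' →
      ∃ u, t - t' = (DualNumber.eps : DualNumber ℂ) • u) ∧
    -- naturality of t in X and Y (mod ε):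
    (∀ (X X' Y Y' : A) (f : X ⟶ X') (g : Y ⟶ Y')
       (t : X ⊗ Y ⟶ X ⊗ Y) (t' : X' ⊗ Y' ⟶ X' ⊗ Y'),
      (β_ X Y).hom ≫ (β_ Y X).hom - 𝟙 (X ⊗ Y) = (DualNumber.eps : DualNumber ℂ) • t →
      (β_ X' Y').hom ≫ (β_ Y' X').hom - 𝟙 (X' ⊗ Y')
          = (DualNumber.eps : DualNumber ℂ) • t' →
      ∃ u, (f ⊗ₘ g) ≫ t' - t ≫ (f ⊗ₘ g) = (DualNumber.eps : DualNumber ℂ) • u) ∧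
    -- symmetry of t: β₀_{Y,X} ∘ t_{Y,X} ∘ β₀_{X,Y} = t_{X,Y} (mod ε):
    (∀ (X Y : A) (t : X ⊗ Y ⟶ X ⊗ Y) (t' : Y ⊗ X ⟶ Y ⊗ X),
      (β_ X Y).hom ≫ (β_ Y X).hom - 𝟙 (X ⊗ Y) = (DualNumber.eps : DualNumber ℂ) • t →
      (β_ Y X).hom ≫ (β_ X Y).hom - 𝟙 (Y ⊗ X) = (DualNumber.eps : DualNumber ℂ) • t' →
      ∃ u, (β_ X Y).hom ≫ t' ≫ (β_ Y X).hom - t = (DualNumber.eps : DualNumber ℂ) • u) := by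
  refine ⟨hsym, ?_, ?_, ?_⟩
  · intro X Y t t' ht ht'
    exact exists_eq_eps_smul_of_eps_smul_eq_zero (by rw [smul_sub, ← ht, ← ht', sub_self])
  · intro X X' Y Y' f g t t' ht ht'
    exact exists_eq_eps_smul_of_eps_smul_eq_zero (eps_smul_tensorHom_comp_sub_eq_zero f g ht ht')
  · intro X Y t t' ht ht'
    exact exists_eq_eps_smul_of_eps_smul_eq_zero (eps_smul_braiding_conj_sub_eq_zero ht ht')

theorem statement_7
    (A : Type u) [Category.{v} A] [MonoidalCategory A] [BraidedCategory A]
    [Preadditive A] [Linear (DualNumber ℂ) A]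
    [MonoidalPreadditive A] [MonoidalLinear (DualNumber ℂ) A]
    -- free Hom-spaces:
    (hfree : ∀ X Y : A, Module.Free (DualNumber ℂ) (X ⟶ Y))
    -- the reduction mod ε is symmetric: β² ≡ id (mod ε):
    (hsym : ∀ X Y : A, ∃ u : X ⊗ Y ⟶ X ⊗ Y,
      (β_ X Y).hom ≫ (β_ Y X).hom - 𝟙 (X ⊗ Y) = (DualNumber.eps : DualNumber ℂ) • u) :
    -- t_{X,Y} := [β² − id]₁ is well-defined: representatives exist and any two agree
    -- modulo ε:
    (∀ X Y : A, ∃ t : X ⊗ Y ⟶ X ⊗ Y,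
      (β_ X Y).hom ≫ (β_ Y X).hom - 𝟙 (X ⊗ Y) = (DualNumber.eps : DualNumber ℂ) • t) ∧
    (∀ (X Y : A) (t t' : X ⊗ Y ⟶ X ⊗ Y),
      (β_ X Y).hom ≫ (β_ Y X).hom - 𝟙 (X ⊗ Y) = (DualNumber.eps : DualNumber ℂ) • t →
      (β_ X Y).hom ≫ (β_ Y X).hom - 𝟙 (X ⊗ Y) = (DualNumber.eps : DualNumber ℂ) • t' →
      ∃ u, t - t' = (DualNumber.eps : DualNumber ℂ) • u) ∧
    -- naturality of t in X and Y (mod ε):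
    (∀ (X X' Y Y' : A) (f : X ⟶ X') (g : Y ⟶ Y')
       (t : X ⊗ Y ⟶ X ⊗ Y) (t' : X' ⊗ Y' ⟶ X' ⊗ Y'),
      (β_ X Y).hom ≫ (β_ Y X).hom - 𝟙 (X ⊗ Y) = (DualNumber.eps : DualNumber ℂ) • t →
      (β_ X' Y').hom ≫ (β_ Y' X').hom - 𝟙 (X' ⊗ Y')
          = (DualNumber.eps : DualNumber ℂ) • t' →
      ∃ u, (f ⊗ₘ g) ≫ t' - t ≫ (f ⊗ₘ g) = (DualNumber.eps : DualNumber ℂ) • u) ∧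
    -- symmetry of t: β₀_{Y,X} ∘ t_{Y,X} ∘ β₀_{X,Y} = t_{X,Y} (mod ε):
    (∀ (X Y : A) (t : X ⊗ Y ⟶ X ⊗ Y) (t' : Y ⊗ X ⟶ Y ⊗ X),
      (β_ X Y).hom ≫ (β_ Y X).hom - 𝟙 (X ⊗ Y) = (DualNumber.eps : DualNumber ℂ) • t →
      (β_ Y X).hom ≫ (β_ X Y).hom - 𝟙 (Y ⊗ X) = (DualNumber.eps : DualNumber ℂ) • t' →
      ∃ u, (β_ X Y).hom ≫ t' ≫ (β_ Y X).hom - t = (DualNumber.eps : DualNumber ℂ) • u) :=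
  statement_7_general A hfree hsym
end

section
/- The ring ℂ[[ħ]], viewed as an object of the category of ħ-adically complete ℂ[[ħ]]-modules, is an α-compact strong generator for every regular cardinal α > ℵ₀: the functor Hom(ℂ[[ħ]], −) is conservative, and it preserves α-filtered colimits (computed in complete modules, i.e. as completions of the underlying colimits). Consequently the category of complete ℂ[[ħ]]-modules is locally α-presentable for α > ℵ₀. Key step: for an α-filtered diagram F of complete modules with α > ℵ₀, the colimit of F taken in ℂ[[ħ]]-modules is already complete, i.e. (colim F)^∧ ≅ colim F. -/
noncomputable abbrev hbarIdeal : Ideal (PowerSeries ℂ) :=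
  Ideal.span {(PowerSeries.X : PowerSeries ℂ)}

/-!
In a direct limit `M = colim Gᵢ` every element of `I ^ n • M` already comes from
`I ^ n • Gᵢ` at some stage `i`. A Cauchy sequence in `M`, or an element of `⋂ₙ I ^ n • M`,
involves only countably many such witnesses, so when every countable set of indices is bounded
above they all live in a single `G_K`, where completeness of `G_K` applies.
-/

namespace Module.DirectLimit

section SMulTop

variable {R ι : Type*} [Semiring R] [Preorder ι] [DecidableEq ι]
  {G : ι → Type*} [∀ i, AddCommMonoid (G i)] [∀ i, Module R (G i)]
  {f : ∀ i j, i ≤ j → G i →ₗ[R] G j}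

theorem monotone_map_of_smul_top (J : Ideal R) :
    Monotone fun i ↦ (J • ⊤ : Submodule R (G i)).map (of R ι G f i) := by
  intro i j hij
  dsimp only
  rw [show of R ι G f i = of R ι G f j ∘ₗ f i j hij from LinearMap.ext fun _ ↦ of_f.symm,
    Submodule.map_comp]
  exact Submodule.map_mono (Submodule.map_le_iff_le_comap.2 (J.smul_top_le_comap_smul_top _))

variable [IsDirectedOrder ι] [Nonempty ι]

theorem iSup_range_of : ⨆ i, LinearMap.range (of R ι G f i) = ⊤ :=
  eq_top_iff.2 fun z _ ↦
    let ⟨i, x, hx⟩ := exists_of z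
    Submodule.mem_iSup_of_mem i ⟨x, hx⟩

theorem smul_top_eq_iSup (J : Ideal R) : (J • ⊤ : Submodule R (DirectLimit G f)) =
    ⨆ i, (J • ⊤ : Submodule R (G i)).map (of R ι G f i) := by
  simp_rw [← iSup_range_of (f := f), Submodule.smul_iSup, Submodule.map_smul'', Submodule.map_top]

theorem mem_smul_top_iff {J : Ideal R} {z : DirectLimit G f} :
    z ∈ (J • ⊤ : Submodule R (DirectLimit G f)) ↔
      ∃ i, ∃ x ∈ (J • ⊤ : Submodule R (G i)), of R ι G f i x = z := by
  rw [smul_top_eq_iSup, Submodule.mem_iSup_of_directed _ (monotone_map_of_smul_top J).directed_le]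
  simp only [Submodule.mem_map]

theorem exists_map_mem_smul_top [DirectedSystem G (f · · ·)] {J : Ideal R} {i : ι} {x : G i}
    (hx : of R ι G f i x ∈ (J • ⊤ : Submodule R (DirectLimit G f))) :
    ∃ j, ∃ hij : i ≤ j, f i j hij x ∈ (J • ⊤ : Submodule R (G j)) := by
  obtain ⟨k, y, hy, hyx⟩ := mem_smul_top_iff.1 hx
  obtain ⟨l, hil, hkl⟩ := exists_ge_ge i k
  rw [← of_f (hij := hil), ← of_f (hij := hkl)] at hyx
  obtain ⟨j, hlj, hj⟩ := exists_eq_of_of_eq hyx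
  refine ⟨j, hil.trans hlj, ?_⟩
  rw [← DirectedSystem.map_map f hil hlj, ← hj, DirectedSystem.map_map f hkl hlj]
  exact J.smul_top_le_comap_smul_top (f k j _) hy

end SMulTop

section Adic

variable {R ι : Type*} [CommRing R] [Preorder ι] [DecidableEq ι] [IsDirectedOrder ι]
  {G : ι → Type*} [∀ i, AddCommGroup (G i)] [∀ i, Module R (G i)]
  {f : ∀ i j, i ≤ j → G i →ₗ[R] G j} [DirectedSystem G (f · · ·)]
  (I : Ideal R)

theorem isHausdorff (hbdd : ∀ s : Set ι, s.Countable → BddAbove s)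
    [∀ i, IsHausdorff I (G i)] : IsHausdorff I (DirectLimit G f) := by
  have : Nonempty ι := ⟨(hbdd ∅ Set.countable_empty).some⟩
  refine ⟨fun z hz ↦ ?_⟩
  obtain ⟨i, x, rfl⟩ := exists_of z
  simp only [SModEq.sub_mem, sub_zero] at hz
  choose k hik hk using fun n ↦ exists_map_mem_smul_top (hz n)
  obtain ⟨K, hK⟩ := hbdd _ (Set.countable_range k)
  have hkK n : k n ≤ K := hK ⟨n, rfl⟩
  have hiK := (hik 0).trans (hkK 0)
  suffices f i K hiK x = 0 by rw [← of_f (hij := hiK), this, map_zero]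
  refine IsHausdorff.haus' (I := I) _ fun n ↦ ?_
  rw [SModEq.sub_mem, sub_zero, ← DirectedSystem.map_map f (hik n) (hkK n)]
  exact (I ^ n).smul_top_le_comap_smul_top _ (hk n)

theorem isPrecomplete (hbdd : ∀ s : Set ι, s.Countable → BddAbove s)
    [∀ i, IsPrecomplete I (G i)] : IsPrecomplete I (DirectLimit G f) := by
  have : Nonempty ι := ⟨(hbdd ∅ Set.countable_empty).some⟩
  refine ⟨fun F hF ↦ ?_⟩
  choose i a ha using fun n ↦ exists_of (f := f) (F n)
  have hstep n : ∃ k, ∃ _ : i n ≤ k, ∃ _ : i (n + 1) ≤ k,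
      f (i n) k ‹_› (a n) - f (i (n + 1)) k ‹_› (a (n + 1)) ∈
        (I ^ n • ⊤ : Submodule R (G k)) := by
    obtain ⟨p, hp, hp'⟩ := exists_ge_ge (i n) (i (n + 1))
    have : of R ι G f p (f _ p hp (a n) - f _ p hp' (a (n + 1))) ∈
        (I ^ n • ⊤ : Submodule R (DirectLimit G f)) := by
      rw [map_sub, of_f, of_f, ha, ha, ← SModEq.sub_mem]
      exact hF n.le_succ
    obtain ⟨k, hpk, hk⟩ := exists_map_mem_smul_top this
    refine ⟨k, hp.trans hpk, hp'.trans hpk, ?_⟩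
    rwa [map_sub, DirectedSystem.map_map, DirectedSystem.map_map] at hk
  choose k hik hik' hk using hstep
  obtain ⟨K, hK⟩ := hbdd _ (Set.countable_range k)
  have hkK n : k n ≤ K := hK ⟨n, rfl⟩
  let A n := f (i n) K ((hik n).trans (hkK n)) (a n)
  have hA : AdicCompletion.IsAdicCauchy I (G K) A :=
      (AdicCompletion.isAdicCauchy_iff I (G K) A).2 fun n ↦ by
    have := (I ^ n).smul_top_le_comap_smul_top (f (k n) K (hkK n)) (hk n)
    rwa [Submodule.mem_comap, map_sub, DirectedSystem.map_map, DirectedSystem.map_map,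
      ← SModEq.sub_mem] at this
  obtain ⟨B, hB⟩ := IsPrecomplete.prec' A hA
  refine ⟨of R ι G f K B, fun n ↦ ?_⟩
  rw [← ha n, ← of_f (hij := (hik n).trans (hkK n)), SModEq.sub_mem, ← map_sub]
  exact (I ^ n).smul_top_le_comap_smul_top _ (SModEq.sub_mem.1 (hB n))

theorem isAdicComplete (hbdd : ∀ s : Set ι, s.Countable → BddAbove s)
    [∀ i, IsAdicComplete I (G i)] : IsAdicComplete I (DirectLimit G f) where
  toIsHausdorff := isHausdorff I hbdd
  toIsPrecomplete := isPrecomplete I hbdd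

end Adic

end Module.DirectLimit

theorem LinearMap.bijective_of_bijective_comp_ringLmap {R M N : Type*} [CommSemiring R]
    [AddCommMonoid M] [Module R M] [AddCommMonoid N] [Module R N] (f : M →ₗ[R] N)
    (hf : Function.Bijective fun g : R →ₗ[R] M ↦ f ∘ₗ g) : Function.Bijective f := by
  have : ⇑f = ringLmapEquivSelf R R N ∘ (fun g : R →ₗ[R] M ↦ f ∘ₗ g) ∘
      (ringLmapEquivSelf R R M).symm := funext fun c ↦ by simp
  rw [this]
  exact ((ringLmapEquivSelf R R N).bijective.comp hf).comp (ringLmapEquivSelf R R M).symm.bijective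

theorem statement_16 :
    -- Hom(ℂ[[ħ]], −) is conservative on complete modules:
    (∀ (C D : Type) [AddCommGroup C] [Module (PowerSeries ℂ) C]
        [AddCommGroup D] [Module (PowerSeries ℂ) D],
      IsAdicComplete hbarIdeal C → IsAdicComplete hbarIdeal D →
      ∀ f : C →ₗ[PowerSeries ℂ] D,
        Function.Bijective
          (fun g : (PowerSeries ℂ) →ₗ[PowerSeries ℂ] C => f ∘ₗ g) →
        Function.Bijective f) ∧
    -- Hom(ℂ[[ħ]], M) ≅ M naturally (evaluation at 1), so ℂ[[ħ]] is a generator and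
    -- Hom(ℂ[[ħ]], −) preserves exactly those colimits that exist in complete modules:
    (∀ (M : Type) [AddCommGroup M] [Module (PowerSeries ℂ) M],
      ∃ e : ((PowerSeries ℂ) →ₗ[PowerSeries ℂ] M) ≃ₗ[PowerSeries ℂ] M,
        ∀ g, e g = g 1) ∧
    -- key step (α-compactness of ℂ[[ħ]] for α > ℵ₀): a countably-directed colimit of
    -- complete modules, computed in ℂ[[ħ]]-modules, is already complete:
    (∀ (ι : Type) [Preorder ι] [IsDirected ι (· ≤ ·)] [DecidableEq ι],
      -- ι is ℵ₁-directed: every countable subset has an upper bound: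
      (∀ s : Set ι, s.Countable → ∃ ub : ι, ∀ i ∈ s, i ≤ ub) →
      ∀ (G : ι → Type) [∀ i, AddCommGroup (G i)] [∀ i, Module (PowerSeries ℂ) (G i)]
        (f : ∀ i j, i ≤ j → G i →ₗ[PowerSeries ℂ] G j),
        DirectedSystem G (fun i j h => f i j h) →
        (∀ i, IsAdicComplete hbarIdeal (G i)) →
        IsAdicComplete hbarIdeal (Module.DirectLimit G f)) := by
  refine ⟨fun C D _ _ _ _ _ _ f ↦ f.bijective_of_bijective_comp_ringLmap,
    fun M _ _ ↦ ⟨LinearMap.ringLmapEquivSelf _ _ M, fun _ ↦ rfl⟩,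
    fun ι _ _ _ hcd G _ _ f _ _ ↦ Module.DirectLimit.isAdicComplete _ fun s hs ↦ ?_⟩
  obtain ⟨ub, hub⟩ := hcd s hs
  exact ⟨ub, fun i hi ↦ hub i hi⟩
end
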